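/- Let (E, ∘, ρ, ⟨·,·⟩) be a Courant algebroid and N a (1,1)-tensor on E whose Nijenhuis torsion with respect to ∘ vanishes and such that N + N* = λ·Id with λ a Casimir function. Then (E, ∘^N, ρ∘N, ⟨·,·⟩) is a Courant algebroid, where X ∘^N Y = NX∘Y + X∘NY − N(X∘Y). -/

import Mathlib

/-!  Core: graded symmetric vector valued forms on a graded vector space,
insertion operators and the Richardson-Nijenhuis bracket. -/

open Finset

noncomputable section

/-- A vector valued `k`-form on the graded vector space `E`: for each choice of degrees of the
`k` homogeneous arguments, a map from tuples of homogeneous elements to `E` (recorded in every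
degree; a form of degree `d` is supported in degree `d + ∑ deg`). -/
abbrev VForm (E : ℤ → Type) (k : ℕ) : Type :=
  ∀ deg : Fin k → ℤ, (∀ j, E (deg j)) → ∀ i : ℤ, E i

/-- Formal sums of vector valued forms: one `k`-form for every arity `k`. -/
abbrev FVForm (E : ℤ → Type) : Type := ∀ k : ℕ, VForm E k

/-- The Koszul sign of a permutation acting on homogeneous elements of the given degrees. -/
def koszul {n : ℕ} (deg : Fin n → ℤ) (σ : Equiv.Perm (Fin n)) : ℤ :=
  ∏ p ∈ Finset.univ.filter
      (fun p : Fin n × Fin n => p.1 < p.2 ∧ σ p.2 < σ p.1),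
    (-1 : ℤ) ^ (deg (σ p.1) * deg (σ p.2)).natAbs

/-- `(k,l)`-unshuffles: permutations of `Fin (k+l)` increasing on the first `k` and on the
last `l` positions. -/
def unshuffles (k l : ℕ) : Finset (Equiv.Perm (Fin (k + l))) :=
  Finset.univ.filter (fun σ =>
    (∀ i j : Fin (k + l), i < j → (j : ℕ) < k → σ i < σ j) ∧
    (∀ i j : Fin (k + l), i < j → k ≤ (i : ℕ) → σ i < σ j))

/-- Prepend a homogeneous element to a homogeneous tuple. -/
def dpair (E : ℤ → Type) {l : ℕ} (A : ℤ) (B : Fin l → ℤ)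
    (c : E A) (f : ∀ b, E (B b)) :
    ∀ j : Fin (l + 1), E (Fin.cases (motive := fun _ => ℤ) A B j) :=
  fun j =>
    Fin.cases (motive := fun j => E (Fin.cases (motive := fun _ => ℤ) A B j))
      (cast (by simp) c)
      (fun b => cast (by simp) (f b)) j

variable {E : ℤ → Type} [∀ i, AddCommGroup (E i)]

/-- Insertion of a `k`-form `K` of degree `dK` into an `(l+1)`-form `L`:
`(ι_K L)(X₁,…,X_{k+l}) = ∑_{σ ∈ Sh(k,l)} ε(σ) L(K(X_{σ(1)},…,X_{σ(k)}), X_{σ(k+1)},…)`. -/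
def ins {k l : ℕ} (dK : ℤ) (K : VForm E k) (L : VForm E (l + 1)) : VForm E (k + l) :=
  fun deg x i =>
    ∑ σ ∈ unshuffles k l,
      koszul deg σ •
        L (Fin.cases (motive := fun _ => ℤ)
             (dK + ∑ a : Fin k, deg (σ (Fin.castAdd l a)))
             (fun b => deg (σ (Fin.natAdd k b))))
          (dpair E (dK + ∑ a : Fin k, deg (σ (Fin.castAdd l a)))
             (fun b => deg (σ (Fin.natAdd k b)))
             (K (fun a => deg (σ (Fin.castAdd l a)))
                (fun a => x (σ (Fin.castAdd l a)))
                (dK + ∑ a : Fin k, deg (σ (Fin.castAdd l a))))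
             (fun b => x (σ (Fin.natAdd k b))))
          i

/-- The insertion operator `ι_K L` on formal sums of vector valued forms, where `dK` is the
degree of `K`.  (Insertion into a `0`-form is zero.) -/
def iotaF (dK : ℤ) (K L : FVForm E) : FVForm E := fun n =>
  ∑ p : Fin (n + 1),
    (Nat.add_sub_cancel' (Nat.lt_succ_iff.mp p.isLt) ▸
        ins dK (K p) (L (n - p + 1)) : VForm E n)

/-- The (graded symmetric) Richardson-Nijenhuis bracket
`[K,L]_RN = ι_K L - (-1)^{dK·dL} ι_L K` of forms of degrees `dK`, `dL`. -/
def rn (dK dL : ℤ) (K L : FVForm E) : FVForm E :=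
  fun n => iotaF dK K L n - ((-1 : ℤ) ^ (dK * dL).natAbs) • iotaF dL L K n

/-- A `k`-form has degree `d` if its value on homogeneous elements of degrees `deg` is
concentrated in degree `d + ∑ deg`. -/
def HasDeg {k : ℕ} (F : VForm E k) (d : ℤ) : Prop :=
  ∀ (deg : Fin k → ℤ) (x : ∀ j, E (deg j)) (i : ℤ), i ≠ d + ∑ j, deg j → F deg x i = 0

/-- A formal sum of forms has degree `d` if all its components do. -/
def FHasDeg (F : FVForm E) (d : ℤ) : Prop := ∀ k, HasDeg (F k) d

/-- Graded symmetry of a vector valued `k`-form (with Koszul signs). -/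
def IsSymmV {k : ℕ} (F : VForm E k) : Prop :=
  ∀ (deg : Fin k → ℤ) (x : ∀ j, E (deg j)) (σ : Equiv.Perm (Fin k)),
    F deg x = koszul deg σ • F (fun j => deg (σ j)) (fun j => x (σ j))

/-- Graded symmetry of a formal sum of vector valued forms. -/
def IsSymmF (F : FVForm E) : Prop := ∀ k, IsSymmV (F k)

/-- A homogeneous element `X ∈ E_d` regarded as a vector valued `0`-form. -/
def ofElem (d : ℤ) (X : E d) : FVForm E := fun k =>
  if k = 0 then (fun _ _ i => if h : d = i then h ▸ X else 0) else 0

/-- The Euler map `S(X) = -|X| X`, as a vector valued `1`-form of degree `0`. -/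
def eulerS (E : ℤ → Type) [∀ i, AddCommGroup (E i)] : FVForm E := fun k =>
  if hk : k = 1 then
    fun deg x i =>
      if h : i = deg ⟨0, by omega⟩ then (-i) • (h.symm ▸ x ⟨0, by omega⟩) else 0
  else 0

/-- The identity of `E`, as a vector valued `1`-form of degree `0`. -/
def idF (E : ℤ → Type) [∀ i, AddCommGroup (E i)] : FVForm E := fun k =>
  if hk : k = 1 then
    fun deg x i =>
      if h : i = deg ⟨0, by omega⟩ then h.symm ▸ x ⟨0, by omega⟩ else 0
  else 0

/-- Apply (the arity-1 component of) a formal sum of forms to one homogeneous element. -/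
def app1 (d : ℤ) (x : E d) (F : FVForm E) : ∀ i, E i :=
  F 1 (fun _ => d) (fun _ => x)

/-- Apply (the arity-2 component of) a formal sum of forms to two homogeneous elements. -/
def app2 (d₁ d₂ : ℤ) (x : E d₁) (y : E d₂) (F : FVForm E) : ∀ i, E i :=
  F 2 (Fin.cases (motive := fun _ => ℤ) d₁ (fun _ => d₂))
    (dpair E d₁ (fun _ => d₂) x (fun _ => y))

/-- Apply (the arity-3 component of) a formal sum of forms to three homogeneous elements. -/
def app3 (d₁ d₂ d₃ : ℤ) (x : E d₁) (y : E d₂) (z : E d₃) (F : FVForm E) : ∀ i, E i :=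
  F 3 (Fin.cases (motive := fun _ => ℤ) d₁ (Fin.cases (motive := fun _ => ℤ) d₂ (fun _ => d₃)))
    (dpair E d₁ (Fin.cases (motive := fun _ => ℤ) d₂ (fun _ => d₃)) x
      (dpair E d₂ (fun _ => d₃) y (fun _ => z)))

/-- Evaluation of a degree-zero `1`-form on a homogeneous element. -/
def ev1 (d : ℤ) (x : E d) (F : FVForm E) : E d := app1 d x F d

end

/-! (Pre-)Courant algebroids, in algebraic form: the ring `R` plays the role of the smooth
functions `C^∞(M)`, the `R`-module `G` the role of the sections `Γ(E)`, and the anchor takes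
values in derivations of `R`. -/

/-- A pre-Courant algebroid structure on the `R`-module `G`: a symmetric nondegenerate
`R`-bilinear pairing, a bracket `∘`, and an anchor `ρ` with values in derivations, satisfying
`ρ(X)⟨Y,Z⟩ = ⟨X∘Y,Z⟩ + ⟨Y,X∘Z⟩` and `ρ(X)⟨Y,Z⟩ = ⟨X,Y∘Z⟩ + ⟨X,Z∘Y⟩`. -/
structure PreCourant (R : Type) [CommRing R] (G : Type) [AddCommGroup G] [Module R G] where
  pair : G →ₗ[R] G →ₗ[R] R
  pair_symm : ∀ X Y, pair X Y = pair Y X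
  pair_nondeg : ∀ X, (∀ Y, pair X Y = 0) → X = 0
  circ : G → G → G
  circ_add_left : ∀ X Y Z, circ (X + Y) Z = circ X Z + circ Y Z
  circ_add_right : ∀ X Y Z, circ X (Y + Z) = circ X Y + circ X Z
  rho : G →ₗ[R] Derivation ℤ R R
  inv_left : ∀ X Y Z, rho X (pair Y Z) = pair (circ X Y) Z + pair Y (circ X Z)
  inv_right : ∀ X Y Z, rho X (pair Y Z) = pair X (circ Y Z) + pair X (circ Z Y)

/-- A Courant algebroid is a pre-Courant algebroid whose bracket satisfies the Leibniz
identity. -/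
def PreCourant.IsCourant {R : Type} [CommRing R] {G : Type} [AddCommGroup G] [Module R G]
    (C : PreCourant R G) : Prop :=
  ∀ X Y Z, C.circ X (C.circ Y Z) = C.circ (C.circ X Y) Z + C.circ Y (C.circ X Z)

/-! The deformed bracket `X ∘^N Y = NX ∘ Y + X ∘ NY - N(X ∘ Y)` is a Leibniz bracket as soon as
`∘` is one and the Nijenhuis torsion of `N` vanishes.  For the pre-Courant axioms of the deformed
structure, `N + N* = λ·Id` lets every occurrence of `N` be moved across the pairing at the cost of
a multiple of `λ`, and `λ` is invisible to the anchor because it is a Casimir. -/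

section Leibniz

variable {G : Type*} [AddCommGroup G]

def IsLeibniz (b : G →+ G →+ G) : Prop :=
  ∀ X Y Z, b X (b Y Z) = b (b X Y) Z + b Y (b X Z)

def deformedBracket (b : G →+ G →+ G) (N : G →+ G) : G →+ G →+ G :=
  b.comp N + b.compl₂ N - b.compr₂ N

@[simp]
theorem deformedBracket_apply (b : G →+ G →+ G) (N : G →+ G) (X Y : G) :
    deformedBracket b N X Y = b (N X) Y + b X (N Y) - N (b X Y) := by
  simp [deformedBracket]

/-- The Leibniz identity of `∘^N` at `(X, Y, Z)` is the sum of the Leibniz identities of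
`∘` at `(NX, NY, Z)`, `(NX, Y, NZ)`, `(X, NY, NZ)`, minus `N` of those at `(NX, Y, Z)`,
`(X, NY, Z)`, `(X, Y, NZ)`, plus `N²` of the one at `(X, Y, Z)`, and of the vanishing torsion at
`(X, Y ∘ Z)`, `(X ∘ Y, Z)`, `(Y, X ∘ Z)`. -/
theorem IsLeibniz.deformedBracket {b : G →+ G →+ G} (hb : IsLeibniz b) {N : G →+ G}
    (htorsion : ∀ X Y, b (N X) (N Y) = N (deformedBracket b N X Y)) :
    IsLeibniz (deformedBracket b N) := by
  intro X Y Z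
  simp only [deformedBracket_apply] at htorsion ⊢
  rw [← htorsion Y Z, ← htorsion X Y, ← htorsion X Z]
  have L1 := hb (N X) (N Y) Z
  have L2 := hb (N X) Y (N Z)
  have L3 := hb X (N Y) (N Z)
  have NL1 := congrArg N (hb (N X) Y Z)
  have NL2 := congrArg N (hb X (N Y) Z)
  have NL3 := congrArg N (hb X Y (N Z))
  have NNL := congrArg (fun W => N (N W)) (hb X Y Z)
  have T1 := htorsion X (b Y Z)
  have T2 := htorsion (b X Y) Z
  have T3 := htorsion Y (b X Z)
  simp only [map_add, map_sub, AddMonoidHom.add_apply, AddMonoidHom.sub_apply]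
    at NL1 NL2 NL3 NNL T1 T2 T3 ⊢
  linear_combination (norm := abel) L1 + L2 + L3 - NL1 - NL2 - NL3 + NNL - T1 + T2 + T3

end Leibniz

namespace PreCourant

variable {R : Type} [CommRing R] {G : Type} [AddCommGroup G] [Module R G] (C : PreCourant R G)

def circHom : G →+ G →+ G :=
  AddMonoidHom.mk' (fun X => AddMonoidHom.mk' (C.circ X) (C.circ_add_right X)) fun X Y => by
    ext Z
    exact C.circ_add_left X Y Z

@[simp]
theorem circHom_apply (X Y : G) : C.circHom X Y = C.circ X Y := rfl

theorem isCourant_iff_isLeibniz : C.IsCourant ↔ IsLeibniz C.circHom := Iff.rfl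

variable {C} {N : G →ₗ[R] G} {lam : R}

theorem rho_pair_skew (hskew : ∀ X Y, C.pair (N X) Y + C.pair X (N Y) = lam * C.pair X Y)
    (hcas : ∀ X, C.rho X lam = 0) (X Y Z : G) :
    C.rho X (C.pair (N Y) Z + C.pair Y (N Z)) = lam * C.rho X (C.pair Y Z) := by
  rw [hskew, Derivation.leibniz, hcas, smul_eq_mul, smul_zero, add_zero]

theorem inv_left_deformedBracket
    (hskew : ∀ X Y, C.pair (N X) Y + C.pair X (N Y) = lam * C.pair X Y)
    (hcas : ∀ X, C.rho X lam = 0) (X Y Z : G) :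
    C.rho (N X) (C.pair Y Z) =
      C.pair (deformedBracket C.circHom N X Y) Z + C.pair Y (deformedBracket C.circHom N X Z) := by
  have hρ := rho_pair_skew hskew hcas X Y Z
  rw [map_add, C.inv_left, C.inv_left] at hρ
  have hXY := hskew (C.circ X Y) Z
  have hXZ := hskew Y (C.circ X Z)
  have hinv := C.inv_left X Y Z
  have hinvN := C.inv_left (N X) Y Z
  simp only [deformedBracket_apply, circHom_apply, AddMonoidHom.coe_coe, map_add, map_sub,
    LinearMap.add_apply, LinearMap.sub_apply]
  linear_combination hinvN - hρ + hXY + hXZ - lam * hinv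

theorem inv_right_deformedBracket
    (hskew : ∀ X Y, C.pair (N X) Y + C.pair X (N Y) = lam * C.pair X Y)
    (hcas : ∀ X, C.rho X lam = 0) (X Y Z : G) :
    C.rho (N X) (C.pair Y Z) =
      C.pair X (deformedBracket C.circHom N Y Z) + C.pair X (deformedBracket C.circHom N Z Y) := by
  have hρ := rho_pair_skew hskew hcas X Y Z
  rw [map_add, C.inv_right, C.inv_right] at hρ
  have hYZ := hskew X (C.circ Y Z)
  have hZY := hskew X (C.circ Z Y)
  have hinv := C.inv_right X Y Z
  have hinvN := C.inv_right (N X) Y Z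
  simp only [deformedBracket_apply, circHom_apply, AddMonoidHom.coe_coe, map_add, map_sub]
  linear_combination hinvN + hYZ + hZY - hρ - lam * hinv

variable (C N lam) in
/-- `(E, ∘^N, ρ ∘ N, ⟨·,·⟩)`; `hskew` is `N + N* = λ·Id` stated without naming `N*`. -/
def deform (hskew : ∀ X Y, C.pair (N X) Y + C.pair X (N Y) = lam * C.pair X Y)
    (hcas : ∀ X, C.rho X lam = 0) : PreCourant R G where
  pair := C.pair
  pair_symm := C.pair_symm
  pair_nondeg := C.pair_nondeg
  circ X Y := deformedBracket C.circHom N X Y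
  circ_add_left X Y Z := by simp only [map_add, AddMonoidHom.add_apply]
  circ_add_right X Y Z := map_add _ Y Z
  rho := C.rho ∘ₗ N
  inv_left := inv_left_deformedBracket hskew hcas
  inv_right := inv_right_deformedBracket hskew hcas

theorem IsCourant.deform (hC : C.IsCourant)
    (hskew : ∀ X Y, C.pair (N X) Y + C.pair X (N Y) = lam * C.pair X Y)
    (hcas : ∀ X, C.rho X lam = 0)
    (htorsion : ∀ X Y, C.circ (N X) (N Y) = N (deformedBracket C.circHom N X Y)) :
    (C.deform N lam hskew hcas).IsCourant :=
  IsLeibniz.deformedBracket ((isCourant_iff_isLeibniz C).mp hC) htorsion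

end PreCourant

theorem deformed_courant_algebroid
    (R : Type) [CommRing R] (G : Type) [AddCommGroup G] [Module R G]
    (C : PreCourant R G) (hC : C.IsCourant)
    (N Nstar : G →ₗ[R] G)
    (hadj : ∀ X Y, C.pair (N X) Y = C.pair X (Nstar Y))
    (lam : R) (hcas : ∀ X, C.rho X lam = 0)
    (hsum : N + Nstar = lam • LinearMap.id)
    (htorsion : ∀ X Y,
      C.circ (N X) (N Y) = N (C.circ (N X) Y + C.circ X (N Y) - N (C.circ X Y))) :
    ∃ C' : PreCourant R G, C'.IsCourant ∧ C'.pair = C.pair ∧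
      (∀ X Y, C'.circ X Y = C.circ (N X) Y + C.circ X (N Y) - N (C.circ X Y)) ∧
      (∀ X, C'.rho X = C.rho (N X)) := by
  have hskew : ∀ X Y, C.pair (N X) Y + C.pair X (N Y) = lam * C.pair X Y := by
    intro X Y
    rw [hadj, ← map_add, ← LinearMap.add_apply, add_comm Nstar, hsum]
    simp
  exact ⟨C.deform N lam hskew hcas, hC.deform hskew hcas htorsion, rfl,
    fun _ _ => deformedBracket_apply _ _ _ _, fun _ => rfl⟩
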